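/- arXiv:2307.14874 — 3 statements merged into one kernel-verified Lean document; each statement's English description precedes it below -/
import Mathlib

section
/- Let N, n, w be positive natural numbers with n ≤ N, let V be a real N×n matrix, let F be a real N×w matrix, and set C = Vᵀ F. Then the infimum over all vectors α ∈ ℝ^N and β ∈ ℝ^n of the squared Frobenius norm ‖(V + α βᵀ) C − F‖_F² is attained; that is, there exist α* ∈ ℝ^N and β* ∈ ℝ^n such that for all α ∈ ℝ^N and β ∈ ℝ^n, ‖(V + α* β*ᵀ) C − F‖_F² ≤ ‖(V + α βᵀ) C − F‖_F². -/
/-!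
With `C = Vᵀ F`, `D = V C - F` and `γ = Cᵀ β`, the objective is `frobSq (D + α γᵀ)`, where `γ` ranges
over the row space `W` of `C`; this is a continuous function of `(α, γ) ∈ ℝ^N × W`. The rescaling
`(α, γ) ↦ (s α, s⁻¹ γ)` leaves `α γᵀ` unchanged, so every value is already taken at a pair with
`‖α‖ = ‖γ‖`. A pair doing at least as well as `α = 0` satisfies `|αᵢ γⱼ| ≤ 2 ‖D‖_F` entrywise, so the
balanced representatives of all competitive pairs lie in a fixed compact product of balls, on
which the minimum is attained.
-/

open Matrix

/-- Squared Frobenius norm of a real matrix: the sum of the squares of all entries. -/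
noncomputable def frobSq {m n : ℕ} (A : Matrix (Fin m) (Fin n) ℝ) : ℝ :=
  ∑ i, ∑ j, (A i j) ^ 2

namespace LinearMap

variable {E G H : Type*} [NormedAddCommGroup E] [NormedSpace ℝ E] [NormedAddCommGroup G]
  [NormedSpace ℝ G] [AddCommGroup H] [Module ℝ H]

theorem exists_apply_apply_eq_and_norm_sq_eq (b : E →ₗ[ℝ] G →ₗ[ℝ] H) (x : E) (y : G) :
    ∃ x' y', b x' y' = b x y ∧ ‖x'‖ ^ 2 = ‖x‖ * ‖y‖ ∧ ‖y'‖ ^ 2 = ‖x‖ * ‖y‖ := by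
  rcases eq_or_ne x 0 with rfl | hx
  · exact ⟨0, 0, by simp⟩
  rcases eq_or_ne y 0 with rfl | hy
  · exact ⟨0, 0, by simp⟩
  have hxy : 0 < ‖y‖ / ‖x‖ := div_pos (norm_pos_iff.2 hy) (norm_pos_iff.2 hx)
  set s := √(‖y‖ / ‖x‖)
  have hs : 0 < s := Real.sqrt_pos.2 hxy
  have hs2 : s ^ 2 = ‖y‖ / ‖x‖ := Real.sq_sqrt hxy.le
  refine ⟨s • x, s⁻¹ • y, ?_, ?_, ?_⟩
  · simp [smul_smul, hs.ne']
  · rw [norm_smul, mul_pow, Real.norm_of_nonneg hs.le, hs2]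
    field_simp
  · rw [norm_smul, mul_pow, norm_inv, Real.norm_of_nonneg hs.le, inv_pow, hs2]
    field_simp

theorem exists_forall_le_comp_apply_apply [FiniteDimensional ℝ E] [FiniteDimensional ℝ G]
    (b : E →ₗ[ℝ] G →ₗ[ℝ] H) (f : H → ℝ) (hf : Continuous fun p : E × G ↦ f (b p.1 p.2))
    (R : ℝ) (hR : ∀ x y, f (b x y) ≤ f 0 → ‖x‖ * ‖y‖ ≤ R) :
    ∃ x₀ y₀, ∀ x y, f (b x₀ y₀) ≤ f (b x y) := by
  set K := Metric.closedBall (0 : E) √R ×ˢ Metric.closedBall (0 : G) √R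
  have hK : IsCompact K := (isCompact_closedBall _ _).prod (isCompact_closedBall _ _)
  have h0K : ((0, 0) : E × G) ∈ K := by simp [K]
  obtain ⟨⟨x₀, y₀⟩, -, hmin⟩ := hK.exists_isMinOn ⟨_, h0K⟩ hf.continuousOn
  refine ⟨x₀, y₀, fun x y ↦ ?_⟩
  have hle_zero : f (b x₀ y₀) ≤ f 0 := by simpa using hmin h0K
  rcases le_total (f 0) (f (b x y)) with hxy | hxy
  · exact hle_zero.trans hxy
  obtain ⟨x', y', hb, hx', hy'⟩ := b.exists_apply_apply_eq_and_norm_sq_eq x y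
  have hnorm := hR x y hxy
  have hmem : (x', y') ∈ K := by
    simp only [K, Set.mem_prod, Metric.mem_closedBall, dist_zero_right]
    exact ⟨Real.le_sqrt_of_sq_le (hx' ▸ hnorm), Real.le_sqrt_of_sq_le (hy' ▸ hnorm)⟩
  simpa [hb] using hmin hmem

end LinearMap

theorem norm_mul_norm_le {ι κ : Type*} [Fintype ι] [Fintype κ] {x : ι → ℝ} {y : κ → ℝ} {r : ℝ}
    (hr : 0 ≤ r) (h : ∀ i j, |x i| * |y j| ≤ r) : ‖x‖ * ‖y‖ ≤ r := by
  rw [mul_comm, ← norm_smul_of_nonneg (norm_nonneg y), pi_norm_le_iff_of_nonneg hr]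
  intro i
  rw [Pi.smul_apply, smul_eq_mul, norm_mul, norm_norm, mul_comm, ← norm_smul,
    pi_norm_le_iff_of_nonneg hr]
  intro j
  simpa [abs_mul] using h i j

@[fun_prop]
theorem continuous_frobSq {m n : ℕ} : Continuous (frobSq : Matrix (Fin m) (Fin n) ℝ → ℝ) := by
  unfold frobSq
  fun_prop

theorem sq_apply_le_frobSq {m n : ℕ} (A : Matrix (Fin m) (Fin n) ℝ) (i : Fin m) (j : Fin n) :
    A i j ^ 2 ≤ frobSq A :=
  calc A i j ^ 2 ≤ ∑ j', A i j' ^ 2 :=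
        Finset.single_le_sum (fun _ _ ↦ sq_nonneg _) (Finset.mem_univ j)
    _ ≤ frobSq A :=
        Finset.single_le_sum (f := fun i ↦ ∑ j, A i j ^ 2)
          (fun _ _ ↦ Finset.sum_nonneg fun _ _ ↦ sq_nonneg _) (Finset.mem_univ i)

theorem norm_mul_norm_le_of_frobSq_add_vecMulVec_le {m n : ℕ} (D : Matrix (Fin m) (Fin n) ℝ)
    (x : Fin m → ℝ) (y : Fin n → ℝ) (h : frobSq (D + vecMulVec x y) ≤ frobSq D) :
    ‖x‖ * ‖y‖ ≤ 2 * √(frobSq D) := by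
  refine norm_mul_norm_le (by positivity) fun i j ↦ ?_
  have h₁ : |(D + vecMulVec x y) i j| ≤ √(frobSq D) :=
    Real.abs_le_sqrt ((sq_apply_le_frobSq _ i j).trans h)
  have h₂ : |D i j| ≤ √(frobSq D) := Real.abs_le_sqrt (sq_apply_le_frobSq _ i j)
  rw [Matrix.add_apply, vecMulVec_apply] at h₁
  calc |x i| * |y j| = |(D i j + x i * y j) - D i j| := by rw [add_sub_cancel_left, abs_mul]
    _ ≤ |D i j + x i * y j| + |D i j| := abs_sub _ _
    _ ≤ 2 * √(frobSq D) := by linarith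

theorem adeim_update_attained_general (N n w : ℕ) (V : Matrix (Fin N) (Fin n) ℝ)
    (F : Matrix (Fin N) (Fin w) ℝ) :
    ∃ (αstar : Fin N → ℝ) (βstar : Fin n → ℝ), ∀ (α : Fin N → ℝ) (β : Fin n → ℝ),
      frobSq ((V + vecMulVec αstar βstar) * (Vᵀ * F) - F) ≤
        frobSq ((V + vecMulVec α β) * (Vᵀ * F) - F) := by
  set C := Vᵀ * F
  set D := V * C - F
  have hD (α : Fin N → ℝ) (β : Fin n → ℝ) :
      (V + vecMulVec α β) * C - F = D + vecMulVec α (β ᵥ* C) := by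
    rw [Matrix.add_mul, vecMulVec_mul, add_sub_right_comm]
  set W := LinearMap.range (vecMulLinear C)
  set b := (vecMulVecBilin ℝ ℝ : (Fin N → ℝ) →ₗ[ℝ] (Fin w → ℝ) →ₗ[ℝ] _).compl₂ W.subtype
  have hf : Continuous fun p : (Fin N → ℝ) × W ↦ frobSq (D + vecMulVec p.1 p.2) := by fun_prop
  obtain ⟨α₀, ⟨_, β₀, rfl⟩, hmin⟩ :=
    b.exists_forall_le_comp_apply_apply (fun M ↦ frobSq (D + M)) hf (2 * √(frobSq D))
      fun x y h ↦ norm_mul_norm_le_of_frobSq_add_vecMulVec_le D x y (by simpa [b] using h)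
  refine ⟨α₀, β₀, fun α β ↦ ?_⟩
  simpa [hD, b] using hmin α ⟨_, β, rfl⟩

/-- The ADEIM basis-update optimization problem
`min_{α, β} ‖(V + α βᵀ) C − F‖_F²` with `C = Vᵀ F` attains its infimum. -/
theorem adeim_update_attained (N n w : ℕ) (hN : 0 < N) (hn : 0 < n) (hw : 0 < w)
    (hnN : n ≤ N) (V : Matrix (Fin N) (Fin n) ℝ) (F : Matrix (Fin N) (Fin w) ℝ) :
    ∃ (αstar : Fin N → ℝ) (βstar : Fin n → ℝ), ∀ (α : Fin N → ℝ) (β : Fin n → ℝ),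
      frobSq ((V + vecMulVec αstar βstar) * (Vᵀ * F) - F) ≤
        frobSq ((V + vecMulVec α β) * (Vᵀ * F) - F) :=
  adeim_update_attained_general N n w V F
end

section
/- Let N, n, w be positive natural numbers, let R be a real N×w matrix and C a real n×w matrix, and let Π be the w×w matrix of the orthogonal projection of ℝ^w onto the row space of C (the span of the rows of C). Then the infimum over all α ∈ ℝ^N and β ∈ ℝ^n of ‖α βᵀ C − R‖_F² equals ‖R‖_F² − σ₁(R Π)², where σ₁(R Π) denotes the largest singular value of R Π. -/
/-!
The rows `βᵀ C` sweep out the row space of `C`, which `Π` fixes; so the objective is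
`‖α vᵀ - R‖²` with `Π v = v`, hence `R v = M v` for `M = R Π`. Expanding,
`‖α vᵀ - R‖² = ‖R‖² - 2 αᵀ M v + ‖α‖² ‖v‖²`, and Cauchy–Schwarz together with the Rayleigh bound
`‖M v‖² ≤ σ₁(M)² ‖v‖²` bounds this below by `‖R‖² - σ₁(M)²`. The bound is attained at
`v = Mᵀ M u = σ₁(M)² u` for a unit top eigenvector `u` of `Mᵀ M`: this `v` lies in the row space
because `Mᵀ = Π Rᵀ`.
-/

open Matrix

/-- The square root of the largest eigenvalue of `Rᴴ R`, which is `Rᵀ R` for real matrices. -/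
noncomputable def sigma1 {N w : ℕ} (R : Matrix (Fin N) (Fin w) ℝ) : ℝ :=
  Real.sqrt (⨆ i, (Matrix.isHermitian_conjTranspose_mul_self R).eigenvalues i)

open scoped ComplexOrder

theorem Matrix.IsHermitian.posSemidef_smul_one_sub {𝕜 n : Type*} [RCLike 𝕜] [Fintype n]
    [DecidableEq n] {A : Matrix n n 𝕜} (hA : A.IsHermitian) {c : ℝ}
    (hc : ∀ i, hA.eigenvalues i ≤ c) : ((c : 𝕜) • 1 - A).PosSemidef := by
  set U : Matrix n n 𝕜 := (hA.eigenvectorUnitary : Matrix n n 𝕜)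
  have hconj : (c : 𝕜) • 1 - A =
      U * diagonal (fun i => ((c - hA.eigenvalues i : ℝ) : 𝕜)) * star U := by
    have hU : U * star U = 1 := Unitary.mul_star_self_of_mem hA.eigenvectorUnitary.2
    conv_lhs => rw [hA.spectral_theorem, Unitary.conjStarAlgAut_apply, ← hU]
    simp only [RCLike.ofReal_sub, ← diagonal_sub, mul_sub, sub_mul]
    rw [← smul_one_eq_diagonal, mul_smul_comm, mul_one, smul_mul_assoc]
    rfl
  rw [hconj, Unitary.isUnit_coe.posSemidef_star_right_conjugate_iff, posSemidef_diagonal_iff]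
  exact fun i => RCLike.ofReal_nonneg.mpr (sub_nonneg.mpr (hc i))

theorem Matrix.IsHermitian.dotProduct_mulVec_le {n : Type*} [Fintype n] [DecidableEq n]
    {A : Matrix n n ℝ} (hA : A.IsHermitian) {c : ℝ} (hc : ∀ i, hA.eigenvalues i ≤ c)
    (x : n → ℝ) : x ⬝ᵥ A *ᵥ x ≤ c * (x ⬝ᵥ x) := by
  have := (hA.posSemidef_smul_one_sub hc).dotProduct_mulVec_nonneg x
  simp only [star_trivial, sub_mulVec, smul_mulVec, one_mulVec, dotProduct_sub,
    dotProduct_smul, RCLike.ofReal_real_eq_id, id, smul_eq_mul] at this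
  linarith

theorem sq_dotProduct_le {n : Type*} [Fintype n] (x y : n → ℝ) :
    (x ⬝ᵥ y) ^ 2 ≤ (x ⬝ᵥ x) * (y ⬝ᵥ y) := by
  simpa only [dotProduct, sq] using Finset.sum_mul_sq_le_sq_mul_sq Finset.univ x y

theorem frobSq_vecMulVec_sub {m n : ℕ} (a : Fin m → ℝ) (v : Fin n → ℝ)
    (R : Matrix (Fin m) (Fin n) ℝ) :
    frobSq (vecMulVec a v - R) = frobSq R - 2 * (a ⬝ᵥ R *ᵥ v) + (a ⬝ᵥ a) * (v ⬝ᵥ v) := by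
  have hentry : ∀ i j, (vecMulVec a v - R) i j ^ 2
      = R i j ^ 2 - 2 * (a i * (R i j * v j)) + a i * a i * (v j * v j) := fun i j => by
    rw [Matrix.sub_apply, vecMulVec_apply]; ring
  simp only [frobSq, hentry, Finset.sum_add_distrib, Finset.sum_sub_distrib, ← Finset.mul_sum,
    ← Finset.sum_mul, dotProduct, mulVec]

section sigma1

variable {m n : ℕ} (M : Matrix (Fin m) (Fin n) ℝ)

theorem sigma1_sq : sigma1 M ^ 2 = ⨆ i, (isHermitian_conjTranspose_mul_self M).eigenvalues i :=
  Real.sq_sqrt (Real.iSup_nonneg (eigenvalues_conjTranspose_mul_self_nonneg M))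

theorem mulVec_dotProduct_mulVec_eq (x : Fin n → ℝ) :
    (M *ᵥ x) ⬝ᵥ (M *ᵥ x) = x ⬝ᵥ (Mᵀ * M) *ᵥ x := by
  rw [← mulVec_mulVec, dotProduct_mulVec, ← mulVec_transpose, dotProduct_comm]

theorem mulVec_dotProduct_mulVec_le_sigma1_sq (x : Fin n → ℝ) :
    (M *ᵥ x) ⬝ᵥ (M *ᵥ x) ≤ sigma1 M ^ 2 * (x ⬝ᵥ x) := by
  rw [sigma1_sq, mulVec_dotProduct_mulVec_eq]
  exact (isHermitian_conjTranspose_mul_self M).dotProduct_mulVec_le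
    (fun i => le_ciSup (Set.finite_range _).bddAbove i) x

theorem exists_eigenvector_sigma1_sq (hn : 0 < n) :
    ∃ u : Fin n → ℝ, u ⬝ᵥ u = 1 ∧ (Mᵀ * M) *ᵥ u = sigma1 M ^ 2 • u := by
  have : Nonempty (Fin n) := ⟨⟨0, hn⟩⟩
  have hA := isHermitian_conjTranspose_mul_self M
  obtain ⟨i, hi⟩ := exists_eq_ciSup_of_finite (f := hA.eigenvalues)
  refine ⟨hA.eigenvectorBasis i, ?_, ?_⟩
  · have h := real_inner_self_eq_norm_sq (hA.eigenvectorBasis i)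
    rw [hA.eigenvectorBasis.orthonormal.1 i, EuclideanSpace.inner_eq_star_dotProduct] at h
    simpa [dotProduct_comm] using h
  · rw [sigma1_sq, ← hi]
    exact hA.mulVec_eigenvectorBasis i

end sigma1

section rankOne

variable {m n : ℕ} (R M : Matrix (Fin m) (Fin n) ℝ)

theorem frobSq_sub_sigma1_sq_le (a : Fin m → ℝ) {v : Fin n → ℝ} (hv : R *ᵥ v = M *ᵥ v) :
    frobSq R - sigma1 M ^ 2 ≤ frobSq (vecMulVec a v - R) := by
  rw [frobSq_vecMulVec_sub, hv]
  have ha0 : 0 ≤ a ⬝ᵥ a := dotProduct_self_star_nonneg a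
  have hv0 : 0 ≤ v ⬝ᵥ v := dotProduct_self_star_nonneg v
  -- `(aᵀ M v)² ≤ ‖a‖² ‖M v‖² ≤ σ₁² ‖a‖² ‖v‖²`, and then `2 aᵀ M v ≤ σ₁² + ‖a‖² ‖v‖²` by AM-GM
  have hcs : (a ⬝ᵥ M *ᵥ v) ^ 2 ≤ sigma1 M ^ 2 * ((a ⬝ᵥ a) * (v ⬝ᵥ v)) := by
    nlinarith [sq_dotProduct_le a (M *ᵥ v),
      mul_le_mul_of_nonneg_left (mulVec_dotProduct_mulVec_le_sigma1_sq M v) ha0]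
  nlinarith [sq_nonneg ((a ⬝ᵥ a) * (v ⬝ᵥ v) - sigma1 M ^ 2), mul_nonneg ha0 hv0]

theorem exists_frobSq_vecMulVec_sub_eq (hn : 0 < n)
    (hRM : ∀ x, R *ᵥ (Mᵀ *ᵥ x) = M *ᵥ (Mᵀ *ᵥ x)) :
    ∃ a x, frobSq (vecMulVec a (Mᵀ *ᵥ x) - R) = frobSq R - sigma1 M ^ 2 := by
  obtain ⟨u, hu, hMu⟩ := exists_eigenvector_sigma1_sq M hn
  set μ := sigma1 M ^ 2
  have hnorm : (M *ᵥ u) ⬝ᵥ (M *ᵥ u) = μ := by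
    rw [mulVec_dotProduct_mulVec_eq, hMu, dotProduct_smul, hu, smul_eq_mul, mul_one]
  -- with `μ⁻¹ = 0` at `μ = 0`, this `a` also works when `σ₁(M) = 0`
  refine ⟨μ⁻¹ • M *ᵥ u, M *ᵥ u, ?_⟩
  have hv : Mᵀ *ᵥ (M *ᵥ u) = μ • u := by rw [mulVec_mulVec, hMu]
  rw [frobSq_vecMulVec_sub, hRM, hv, mulVec_smul]
  simp only [smul_dotProduct, dotProduct_smul, hnorm, hu, smul_eq_mul]
  rcases eq_or_ne μ 0 with h | h
  · simp [h]
  · field_simp; ring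

end rankOne

theorem adeim_optimal_value_general (N n w : ℕ) (hw : 0 < w)
    (R : Matrix (Fin N) (Fin w) ℝ) (C : Matrix (Fin n) (Fin w) ℝ)
    (Pr : Matrix (Fin w) (Fin w) ℝ) (hsymm : Prᵀ = Pr) (hidem : Pr * Pr = Pr)
    (hrange : LinearMap.range Pr.mulVecLin = Submodule.span ℝ (Set.range fun i => C i)) :
    IsGLB {t : ℝ | ∃ (α : Fin N → ℝ) (β : Fin n → ℝ),
        t = frobSq (vecMulVec α β * C - R)} (frobSq R - sigma1 (R * Pr) ^ 2) := by
  have hrows : LinearMap.range C.vecMulLinear = LinearMap.range Pr.mulVecLin :=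
    (range_vecMulLinear C).trans hrange.symm
  have hfix : ∀ x, R *ᵥ (Pr *ᵥ x) = (R * Pr) *ᵥ (Pr *ᵥ x) := fun x => by
    rw [mulVec_mulVec, mulVec_mulVec, Matrix.mul_assoc, hidem]
  have hMt : (R * Pr)ᵀ = Pr * Rᵀ := by rw [transpose_mul, hsymm]
  obtain ⟨α, x, hopt⟩ := exists_frobSq_vecMulVec_sub_eq R (R * Pr) hw fun x => by
    rw [hMt, ← mulVec_mulVec, hfix]
  obtain ⟨β, hβ⟩ : Pr *ᵥ (Rᵀ *ᵥ x) ∈ LinearMap.range C.vecMulLinear :=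
    hrows ▸ LinearMap.mem_range_self _ _
  refine IsLeast.isGLB ⟨⟨α, β, ?_⟩, ?_⟩
  · rw [vecMulVec_mul, ← hopt, hMt, ← mulVec_mulVec, ← hβ]
    rfl
  · rintro _ ⟨a, b, rfl⟩
    obtain ⟨y, hy⟩ : b ᵥ* C ∈ LinearMap.range Pr.mulVecLin := hrows ▸ LinearMap.mem_range_self _ b
    rw [vecMulVec_mul, ← hy]
    exact frobSq_sub_sigma1_sq_le R (R * Pr) a (hfix y)

/-- The optimal value of the ADEIM rank-one update problem: if `Pr` is the matrix of the
orthogonal projection of `ℝ^w` onto the row space of `C` (symmetric, idempotent, with range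
equal to the span of the rows of `C`), then the infimum over `α, β` of `‖α βᵀ C − R‖_F²`
equals `‖R‖_F² − σ₁(R Pr)²`. -/
theorem adeim_optimal_value (N n w : ℕ) (hN : 0 < N) (hn : 0 < n) (hw : 0 < w)
    (R : Matrix (Fin N) (Fin w) ℝ) (C : Matrix (Fin n) (Fin w) ℝ)
    (Pr : Matrix (Fin w) (Fin w) ℝ) (hsymm : Prᵀ = Pr) (hidem : Pr * Pr = Pr)
    (hrange : LinearMap.range Pr.mulVecLin = Submodule.span ℝ (Set.range fun i => C i)) :
    IsGLB {t : ℝ | ∃ (α : Fin N → ℝ) (β : Fin n → ℝ),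
        t = frobSq (vecMulVec α β * C - R)} (frobSq R - sigma1 (R * Pr) ^ 2) :=
  adeim_optimal_value_general N n w hw R C Pr hsymm hidem hrange
end

section
/- Let N, n be positive natural numbers with n ≤ N, let V be a real N×n matrix, and let s₁, …, s_{m_s} ∈ {1, …, N} be pairwise distinct indices with corresponding selection matrix S = [e_{s₁}, …, e_{s_{m_s}}] ∈ {0,1}^{N×m_s} built from canonical unit vectors, with complementary selection matrix S̆ ∈ {0,1}^{N×(N−m_s)} corresponding to the indices in {1,…,N} \ {s₁,…,s_{m_s}}. Assume the m_s×n matrix Sᵀ V has rank n. Then for every vector g in the column space of V, the vector q̂ ∈ ℝ^N defined by Sᵀ q̂ = Sᵀ g and S̆ᵀ q̂ = S̆ᵀ V (Sᵀ V)^† Sᵀ g satisfies q̂ = g, where (Sᵀ V)^† denotes the Moore–Penrose pseudoinverse of Sᵀ V. -/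
open Matrix

/-- The Moore–Penrose pseudoinverse of a full-column-rank real matrix `A`,
given by `A† = (Aᵀ A)⁻¹ Aᵀ`. -/
noncomputable def pinv {m n : ℕ} (A : Matrix (Fin m) (Fin n) ℝ) : Matrix (Fin n) (Fin m) ℝ :=
  (Aᵀ * A)⁻¹ * Aᵀ

/-! Full column rank makes `(Sᵀ V)†` a left inverse of `Sᵀ V`, so the interpolant
`V (Sᵀ V)† Sᵀ g` reproduces every `g = V x`. Hence `q̂` agrees with `g` on the sampled indices by
definition and on the complementary ones by this identity. -/

def selectionMatrix {ι κ : Type*} (R : Type*) [DecidableEq ι] [Zero R] [One R] (s : κ → ι) :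
    Matrix ι κ R :=
  of fun i j => if i = s j then 1 else 0

theorem selectionMatrix_transpose_mulVec {ι κ R : Type*} [Fintype ι] [DecidableEq ι]
    [NonAssocSemiring R] (s : κ → ι) (v : ι → R) :
    (selectionMatrix R s)ᵀ *ᵥ v = v ∘ s := by
  ext j
  simp [selectionMatrix, mulVec, dotProduct]

theorem Matrix.isUnit_of_rank_eq_card {n K : Type*} [Fintype n] [DecidableEq n] [Field K]
    {M : Matrix n n K} (h : M.rank = Fintype.card n) : IsUnit M := by
  have hrange : LinearMap.range M.mulVecLin = ⊤ :=
    Submodule.eq_top_of_finrank_eq (by rw [← Matrix.rank, h, Module.finrank_fintype_fun_eq_card])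
  exact mulVec_surjective_iff_isUnit.mp (LinearMap.range_eq_top.mp hrange)

theorem pinv_mul_self_of_rank_eq {m n : ℕ} {A : Matrix (Fin m) (Fin n) ℝ} (h : A.rank = n) :
    pinv A * A = 1 := by
  have hunit : IsUnit (Aᵀ * A) :=
    isUnit_of_rank_eq_card (by rw [rank_transpose_mul_self, h, Fintype.card_fin])
  rw [pinv, Matrix.mul_assoc, nonsing_inv_mul _ ((isUnit_iff_isUnit_det _).mp hunit)]

theorem mul_pinv_mul_mulVec_of_rank_eq {p N m n : ℕ} (T : Matrix (Fin p) (Fin N) ℝ)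
    {S : Matrix (Fin N) (Fin m) ℝ} {V : Matrix (Fin N) (Fin n) ℝ} (h : (Sᵀ * V).rank = n)
    (x : Fin n → ℝ) :
    (T * V * pinv (Sᵀ * V) * Sᵀ) *ᵥ (V *ᵥ x) = T *ᵥ (V *ᵥ x) := by
  calc (T * V * pinv (Sᵀ * V) * Sᵀ) *ᵥ (V *ᵥ x)
      = (T * V * (pinv (Sᵀ * V) * (Sᵀ * V))) *ᵥ x := by
        simp only [mulVec_mulVec, Matrix.mul_assoc]
    _ = T *ᵥ (V *ᵥ x) := by rw [pinv_mul_self_of_rank_eq h, Matrix.mul_one, mulVec_mulVec]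

theorem funext_of_comp_eq_of_compl_range_subset {α β κ κ' : Type*} {v w : α → β}
    {s : κ → α} {sc : κ' → α} (hcompl : (Set.range s)ᶜ ⊆ Set.range sc)
    (hs : v ∘ s = w ∘ s) (hsc : v ∘ sc = w ∘ sc) : v = w := by
  funext i
  by_cases hi : i ∈ Set.range s
  · obtain ⟨j, rfl⟩ := hi
    exact congrFun hs j
  · obtain ⟨j, rfl⟩ := hcompl hi
    exact congrFun hsc j

theorem eim_reconstruction_exact_general (N n ms : ℕ)
    (V : Matrix (Fin N) (Fin n) ℝ)
    (s : Fin ms → Fin N)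
    (sc : Fin (N - ms) → Fin N)
    (hcompl : Set.range sc = (Set.range s)ᶜ)
    (S : Matrix (Fin N) (Fin ms) ℝ)
    (hS : S = Matrix.of fun i j => if i = s j then (1 : ℝ) else 0)
    (Sc : Matrix (Fin N) (Fin (N - ms)) ℝ)
    (hSc : Sc = Matrix.of fun i j => if i = sc j then (1 : ℝ) else 0)
    (hrank : (Sᵀ * V).rank = n)
    (g : Fin N → ℝ) (hg : g ∈ LinearMap.range V.mulVecLin)
    (qhat : Fin N → ℝ)
    (h1 : Sᵀ *ᵥ qhat = Sᵀ *ᵥ g)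
    (h2 : Scᵀ *ᵥ qhat = (Scᵀ * V * pinv (Sᵀ * V) * Sᵀ) *ᵥ g) :
    qhat = g := by
  obtain ⟨x, rfl⟩ := hg
  have hScq : Scᵀ *ᵥ qhat = Scᵀ *ᵥ (V *ᵥ x) :=
    h2.trans (mul_pinv_mul_mulVec_of_rank_eq _ hrank x)
  replace hS : S = selectionMatrix ℝ s := hS
  replace hSc : Sc = selectionMatrix ℝ sc := hSc
  rw [hS, selectionMatrix_transpose_mulVec, selectionMatrix_transpose_mulVec] at h1
  rw [hSc, selectionMatrix_transpose_mulVec, selectionMatrix_transpose_mulVec] at hScq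
  exact funext_of_comp_eq_of_compl_range_subset hcompl.ge h1 hScq

/-- Exactness of the empirical-interpolation reconstruction: if `S` is the selection matrix
for pairwise distinct sampling indices `s₁, …, s_{m_s}`, `Sc` the complementary selection
matrix, `Sᵀ V` has full column rank `n`, and `g` lies in the column space of `V`, then the
vector `q̂` defined by `Sᵀ q̂ = Sᵀ g` and `Scᵀ q̂ = Scᵀ V (Sᵀ V)† Sᵀ g` equals `g`. -/
theorem eim_reconstruction_exact (N n ms : ℕ) (hN : 0 < N) (hn : 0 < n) (hnN : n ≤ N)
    (hms : 0 < ms)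
    (V : Matrix (Fin N) (Fin n) ℝ)
    (s : Fin ms → Fin N) (hs : Function.Injective s)
    (sc : Fin (N - ms) → Fin N) (hsc : Function.Injective sc)
    (hcompl : Set.range sc = (Set.range s)ᶜ)
    (S : Matrix (Fin N) (Fin ms) ℝ)
    (hS : S = Matrix.of fun i j => if i = s j then (1 : ℝ) else 0)
    (Sc : Matrix (Fin N) (Fin (N - ms)) ℝ)
    (hSc : Sc = Matrix.of fun i j => if i = sc j then (1 : ℝ) else 0)
    (hrank : (Sᵀ * V).rank = n)
    (g : Fin N → ℝ) (hg : g ∈ LinearMap.range V.mulVecLin)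
    (qhat : Fin N → ℝ)
    (h1 : Sᵀ *ᵥ qhat = Sᵀ *ᵥ g)
    (h2 : Scᵀ *ᵥ qhat = (Scᵀ * V * pinv (Sᵀ * V) * Sᵀ) *ᵥ g) :
    qhat = g :=
  eim_reconstruction_exact_general N n ms V s sc hcompl S hS Sc hSc hrank g hg qhat h1 h2
end
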